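/- Let −3 < ϱ < 0, let b₀ : [−1,1] → [0,∞) be measurable with b₀(s) ≤ C₀·max(s,0) for all s and some C₀ > 0, let q > 0 and 0 < θ ≤ 2 (with 0 < q < 1 when θ = 2), and let ϑ ≥ 0. Then there exists C > 0, independent of t, such that for every t ≥ 0 and all measurable f₁, f₂ : ℝ³ → ℝ: sup_{v∈ℝ³} (1+|v|²)^{−ϱ/2} w_{q,θ,ϑ}(t,v) ∫_{ℝ³}∫_{S²} |v−u|^ϱ b₀(ω·(u−v)/|u−v|) √μ(u) ( |f₁(u′)| |f₂(v′)| + |f₁(u)| |f₂(v)| ) dω du ≤ C · (sup_v w_{q,θ,ϑ}(t,v)|f₁(v)|) · (sup_v w_{q,θ,ϑ}(t,v)|f₂(v)|). In particular, sup_v (1+|v|²)^{−ϱ/2} w_{q,θ,ϑ}(t,v) |Γ(f₁,f₂)(v)| is bounded by the same right-hand side. -/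

import Mathlib

open MeasureTheory

noncomputable section

/-- Velocity space `ℝ³`. -/
abbrev V3 : Type := EuclideanSpace ℝ (Fin 3)

/-- Normalized global Maxwellian `μ(v) = (2π)⁻¹ e^{-|v|²/2}`. -/
def maxwellian (v : V3) : ℝ := (2 * Real.pi)⁻¹ * Real.exp (-‖v‖ ^ 2 / 2)

/-- Post-collisional velocity `v′ = v + ((u-v)·ω)ω`. -/
def vPost (u v ω : V3) : V3 := v + (inner ℝ (u - v) ω : ℝ) • ω

/-- Post-collisional velocity `u′ = u - ((u-v)·ω)ω`. -/
def uPost (u v ω : V3) : V3 := u - (inner ℝ (u - v) ω : ℝ) • ω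

/-- Time–velocity weight `w_{q,θ,ϑ}(t,v) = exp(q|v|^θ/8 + q|v|^θ/(8(1+t)^ϑ))`. -/
def wt (q θ ϑ t : ℝ) (v : V3) : ℝ :=
  Real.exp (q * ‖v‖ ^ θ / 8 + q * ‖v‖ ^ θ / (8 * (1 + t) ^ ϑ))

/-- Surface measure on the unit sphere `S² ⊂ ℝ³`. -/
def sphMeasure : Measure (Metric.sphere (0 : V3) 1) := (volume : Measure V3).toSphere

/-- Nonlinear Boltzmann collision operator in the perturbation variable,
`Γ(f₁,f₂)(v) = ∫∫ |v-u|^ϱ b₀(cos θ) √μ(u) [f₁(u′)f₂(v′) - f₁(u)f₂(v)] dω du`. -/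
def GamOp (ϱ : ℝ) (b₀ : ℝ → ℝ) (f₁ f₂ : V3 → ℝ) (v : V3) : ℝ :=
  ∫ u : V3, ∫ ω : Metric.sphere (0 : V3) 1,
      ‖v - u‖ ^ ϱ * b₀ ((inner ℝ (ω : V3) (u - v) : ℝ) / ‖u - v‖) *
        Real.sqrt (maxwellian u) *
        (f₁ (uPost u v (ω : V3)) * f₂ (vPost u v (ω : V3)) - f₁ u * f₂ v) ∂sphMeasure

open Metric Set

/-!
The collision kernel is at most `C₀ |v - u|^ϱ e^{-|u|²/4}`, because the cosine is at most one and
`√μ(u) ≤ e^{-|u|²/4}`. Energy conservation `|u′|² + |v′|² = |u|² + |v|²` and the subadditivity of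
`x ↦ x^{θ/2}` for `θ ≤ 2` give `w(v) ≤ w(u′) w(v′)`; together with `w ≥ 1` this bounds both the
gain and the loss term by `2 M₁ M₂ / w(v)` times the kernel. It remains to show
`∫ |v - u|^ϱ e^{-|u|²/4} du ≲ (1 + |v|²)^{ϱ/2}` uniformly in `v`: by Peetre's inequality
`1 + |v| ≤ (1 + |u|)(1 + |v - u|)` and `(1 + |z|)^{-ϱ} |z|^ϱ ≤ 2^{-ϱ} (1 + 1_{|z|<1} |z|^ϱ)`, the
integrand times `(1 + |v|²)^{-ϱ/2}` is dominated by a Gaussian plus a translate of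
`1_{|z|<1} |z|^ϱ`, which is integrable since `ϱ > -3`.
-/

section Collision

variable {u v ω : V3}

theorem norm_uPost_sq_add_norm_vPost_sq (hω : ‖ω‖ = 1) :
    ‖uPost u v ω‖ ^ 2 + ‖vPost u v ω‖ ^ 2 = ‖u‖ ^ 2 + ‖v‖ ^ 2 := by
  rw [uPost, vPost, norm_sub_sq_real, norm_add_sq_real, norm_smul, real_inner_smul_right,
    real_inner_smul_right, inner_sub_left, Real.norm_eq_abs, mul_pow, sq_abs, hω]
  ring

theorem norm_rpow_le_norm_uPost_rpow_add_norm_vPost_rpow {θ : ℝ} (hθ₀ : 0 ≤ θ) (hθ₂ : θ ≤ 2)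
    (hω : ‖ω‖ = 1) : ‖v‖ ^ θ ≤ ‖uPost u v ω‖ ^ θ + ‖vPost u v ω‖ ^ θ := by
  have sq_rpow : ∀ x : V3, (‖x‖ ^ 2) ^ (θ / 2) = ‖x‖ ^ θ := fun x => by
    rw [← Real.rpow_natCast, ← Real.rpow_mul (norm_nonneg x)]
    ring_nf
  calc ‖v‖ ^ θ = (‖v‖ ^ 2) ^ (θ / 2) := (sq_rpow v).symm
    _ ≤ (‖uPost u v ω‖ ^ 2 + ‖vPost u v ω‖ ^ 2) ^ (θ / 2) := by
        rw [norm_uPost_sq_add_norm_vPost_sq hω]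
        gcongr
        exact le_add_of_nonneg_left (sq_nonneg _)
    _ ≤ (‖uPost u v ω‖ ^ 2) ^ (θ / 2) + (‖vPost u v ω‖ ^ 2) ^ (θ / 2) :=
        Real.rpow_add_le_add_rpow (sq_nonneg _) (sq_nonneg _) (by positivity) (by linarith)
    _ = ‖uPost u v ω‖ ^ θ + ‖vPost u v ω‖ ^ θ := by rw [sq_rpow, sq_rpow]

end Collision

section Weight

variable {q θ ϑ t : ℝ}

theorem wt_eq_exp (v : V3) :
    wt q θ ϑ t v = Real.exp ((q / 8 + q / (8 * (1 + t) ^ ϑ)) * ‖v‖ ^ θ) := by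
  rw [wt]
  ring_nf

theorem wt_coeff_nonneg (hq : 0 ≤ q) (ht : 0 ≤ t) : 0 ≤ q / 8 + q / (8 * (1 + t) ^ ϑ) := by
  have := Real.rpow_nonneg (by linarith : (0 : ℝ) ≤ 1 + t) ϑ
  positivity

theorem one_le_wt (hq : 0 ≤ q) (ht : 0 ≤ t) (v : V3) : 1 ≤ wt q θ ϑ t v := by
  rw [wt_eq_exp]
  exact Real.one_le_exp (mul_nonneg (wt_coeff_nonneg hq ht) (by positivity))

theorem wt_le_wt_uPost_mul_wt_vPost (hq : 0 ≤ q) (hθ₀ : 0 ≤ θ) (hθ₂ : θ ≤ 2) (ht : 0 ≤ t)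
    {u v ω : V3} (hω : ‖ω‖ = 1) :
    wt q θ ϑ t v ≤ wt q θ ϑ t (uPost u v ω) * wt q θ ϑ t (vPost u v ω) := by
  rw [wt_eq_exp, wt_eq_exp, wt_eq_exp, ← Real.exp_add, Real.exp_le_exp, ← mul_add]
  exact mul_le_mul_of_nonneg_left
    (norm_rpow_le_norm_uPost_rpow_add_norm_vPost_rpow hθ₀ hθ₂ hω) (wt_coeff_nonneg hq ht)

theorem wt_mul_collision_le (hq : 0 ≤ q) (hθ₀ : 0 ≤ θ) (hθ₂ : θ ≤ 2) (ht : 0 ≤ t)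
    {f₁ f₂ : V3 → ℝ} {M₁ M₂ : ℝ} (hM₁ : ∀ u, wt q θ ϑ t u * |f₁ u| ≤ M₁)
    (hM₂ : ∀ u, wt q θ ϑ t u * |f₂ u| ≤ M₂) {u v ω : V3} (hω : ‖ω‖ = 1) :
    wt q θ ϑ t v * (|f₁ (uPost u v ω)| * |f₂ (vPost u v ω)| + |f₁ u| * |f₂ v|) ≤
      2 * (M₁ * M₂) := by
  have wt_nonneg : ∀ x, 0 ≤ wt q θ ϑ t x := fun x => zero_le_one.trans (one_le_wt hq ht x)
  have hM₁₀ : 0 ≤ M₁ := (mul_nonneg (wt_nonneg u) (abs_nonneg _)).trans (hM₁ u)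
  have gain : wt q θ ϑ t v * (|f₁ (uPost u v ω)| * |f₂ (vPost u v ω)|) ≤ M₁ * M₂ :=
    calc _ ≤ wt q θ ϑ t (uPost u v ω) * wt q θ ϑ t (vPost u v ω) *
            (|f₁ (uPost u v ω)| * |f₂ (vPost u v ω)|) := by
          gcongr
          exact wt_le_wt_uPost_mul_wt_vPost hq hθ₀ hθ₂ ht hω
      _ = (wt q θ ϑ t (uPost u v ω) * |f₁ (uPost u v ω)|) *
            (wt q θ ϑ t (vPost u v ω) * |f₂ (vPost u v ω)|) := by ring
      _ ≤ M₁ * M₂ := mul_le_mul (hM₁ _) (hM₂ _) (mul_nonneg (wt_nonneg _) (abs_nonneg _)) hM₁₀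
  have loss : wt q θ ϑ t v * (|f₁ u| * |f₂ v|) ≤ M₁ * M₂ :=
    calc _ = |f₁ u| * (wt q θ ϑ t v * |f₂ v|) := by ring
      _ ≤ (wt q θ ϑ t u * |f₁ u|) * M₂ :=
          mul_le_mul (le_mul_of_one_le_left (abs_nonneg _) (one_le_wt hq ht u)) (hM₂ v)
            (mul_nonneg (wt_nonneg v) (abs_nonneg _)) (mul_nonneg (wt_nonneg _) (abs_nonneg _))
      _ ≤ M₁ * M₂ := by
          gcongr
          · exact (mul_nonneg (wt_nonneg v) (abs_nonneg _)).trans (hM₂ v)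
          · exact hM₁ u
  linarith

end Weight

theorem sqrt_maxwellian_le (u : V3) : Real.sqrt (maxwellian u) ≤ Real.exp (-‖u‖ ^ 2 / 4) := by
  rw [Real.sqrt_le_left (Real.exp_pos _).le, maxwellian, ← Real.exp_nat_mul]
  calc (2 * Real.pi)⁻¹ * Real.exp (-‖u‖ ^ 2 / 2) ≤ Real.exp (-‖u‖ ^ 2 / 2) :=
        mul_le_of_le_one_left (Real.exp_pos _).le
          (inv_le_one_of_one_le₀ (by linarith [Real.pi_gt_three]))
    _ = Real.exp (((2 : ℕ) : ℝ) * (-‖u‖ ^ 2 / 4)) := by ring_nf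

theorem real_inner_div_norm_le_one {E : Type*} [NormedAddCommGroup E] [InnerProductSpace ℝ E]
    {ω : E} (hω : ‖ω‖ = 1) (x : E) : inner ℝ ω x / ‖x‖ ≤ 1 := by
  rcases (norm_nonneg x).eq_or_lt with hx | hx
  · simp [← hx]
  · rw [div_le_one hx]
    simpa [hω] using real_inner_le_norm ω x

def collisionKernel (ϱ : ℝ) (b₀ : ℝ → ℝ) (u v ω : V3) : ℝ :=
  ‖v - u‖ ^ ϱ * b₀ (inner ℝ ω (u - v) / ‖u - v‖) * Real.sqrt (maxwellian u)

section CollisionKernel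

variable {ϱ C₀ : ℝ} {b₀ : ℝ → ℝ} {u v ω : V3}

theorem collisionKernel_nonneg (hb₀ : ∀ s, 0 ≤ b₀ s) : 0 ≤ collisionKernel ϱ b₀ u v ω := by
  have := hb₀ (inner ℝ ω (u - v) / ‖u - v‖)
  unfold collisionKernel
  positivity

theorem collisionKernel_le (hC₀ : 0 ≤ C₀) (hb₀ : ∀ s, b₀ s ≤ C₀ * max s 0) (hω : ‖ω‖ = 1) :
    collisionKernel ϱ b₀ u v ω ≤ C₀ * (‖v - u‖ ^ ϱ * Real.exp (-‖u‖ ^ 2 / 4)) := by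
  have hb₀_le : b₀ (inner ℝ ω (u - v) / ‖u - v‖) ≤ C₀ :=
    (hb₀ _).trans (mul_le_of_le_one_right hC₀
      (max_le (real_inner_div_norm_le_one hω _) zero_le_one))
  calc collisionKernel ϱ b₀ u v ω ≤ ‖v - u‖ ^ ϱ * C₀ * Real.exp (-‖u‖ ^ 2 / 4) := by
        unfold collisionKernel
        gcongr
        exact sqrt_maxwellian_le u
    _ = _ := by ring

end CollisionKernel

section KernelDecay

theorem integrable_exp_neg_mul_sq_norm {b : ℝ} (hb : 0 < b) :
    Integrable fun v : V3 => Real.exp (-b * ‖v‖ ^ 2) := by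
  have := (GaussianFourier.integrable_cexp_neg_mul_sq_norm_add (V := V3) (b := b)
    (by simpa using hb) 0 0).norm
  refine this.congr (ae_of_all _ fun v => ?_)
  simp only [zero_mul, add_zero, Complex.norm_exp]
  norm_cast

theorem one_add_rpow_mul_exp_neg_sq_le {a x : ℝ} (ha : 0 ≤ a) (hx : 0 ≤ x) :
    (1 + x) ^ a * Real.exp (-x ^ 2 / 4) ≤ Real.exp (2 * a ^ 2) * Real.exp (-x ^ 2 / 8) := by
  have h : (1 + x) ^ a ≤ Real.exp (a * x) := by
    rw [mul_comm, Real.exp_mul]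
    gcongr
    linarith [Real.add_one_le_exp x]
  calc (1 + x) ^ a * Real.exp (-x ^ 2 / 4) ≤ Real.exp (a * x) * Real.exp (-x ^ 2 / 4) := by
        gcongr
    _ ≤ Real.exp (2 * a ^ 2) * Real.exp (-x ^ 2 / 8) := by
        rw [← Real.exp_add, ← Real.exp_add, Real.exp_le_exp]
        nlinarith [sq_nonneg (a - x / 4)]

theorem integrable_one_add_norm_rpow_mul_exp {a : ℝ} (ha : 0 ≤ a) :
    Integrable fun u : V3 => (1 + ‖u‖) ^ a * Real.exp (-‖u‖ ^ 2 / 4) := by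
  refine ((integrable_exp_neg_mul_sq_norm (b := 1 / 8) (by norm_num)).const_mul
    (Real.exp (2 * a ^ 2))).mono' (by fun_prop) (ae_of_all _ fun u => ?_)
  rw [Real.norm_of_nonneg (by positivity)]
  convert one_add_rpow_mul_exp_neg_sq_le ha (norm_nonneg u) using 3
  ring

theorem one_add_rpow_mul_exp_neg_sq_le_exp {a x : ℝ} (ha : 0 ≤ a) (hx : 0 ≤ x) :
    (1 + x) ^ a * Real.exp (-x ^ 2 / 4) ≤ Real.exp (2 * a ^ 2) :=
  (one_add_rpow_mul_exp_neg_sq_le ha hx).trans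
    (mul_le_of_le_one_right (Real.exp_pos _).le (Real.exp_le_one_iff.2 (by nlinarith)))

variable {E : Type*} [NormedAddCommGroup E]

theorem integrable_indicator_ball_norm_rpow [NormedSpace ℝ E] [FiniteDimensional ℝ E]
    [MeasurableSpace E] [BorelSpace E] {μ : Measure E} [μ.IsAddHaarMeasure]
    (hd : 1 ≤ Module.finrank ℝ E) {ϱ : ℝ} (hϱ : -(Module.finrank ℝ E : ℝ) < ϱ) :
    Integrable ((ball (0 : E) 1).indicator fun z => ‖z‖ ^ ϱ) μ := by
  refine IntegrableOn.integrable_indicator ?_ measurableSet_ball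
  refine integrableOn_ball_of_norm_le_rpow (C := 1) (α := -ϱ) hd (by linarith)
    (ae_of_all _ fun z => ?_) (measurable_norm.pow_const ϱ).aestronglyMeasurable
  rw [neg_neg, one_mul, Real.norm_of_nonneg (by positivity)]

theorem one_add_norm_le_mul_one_add_norm_sub (u v : E) :
    1 + ‖v‖ ≤ (1 + ‖u‖) * (1 + ‖v - u‖) := by
  nlinarith [norm_le_norm_add_norm_sub' v u, norm_nonneg u, norm_nonneg (v - u),
    mul_nonneg (norm_nonneg u) (norm_nonneg (v - u))]

theorem one_add_norm_rpow_mul_norm_rpow_le {ϱ : ℝ} (hϱ : ϱ < 0) (z : E) :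
    (1 + ‖z‖) ^ (-ϱ) * ‖z‖ ^ ϱ ≤ 2 ^ (-ϱ) * (1 + (ball (0 : E) 1).indicator (‖·‖ ^ ϱ) z) := by
  by_cases hz : z ∈ ball (0 : E) 1
  · rw [indicator_of_mem hz]
    have hz' : ‖z‖ < 1 := mem_ball_zero_iff.1 hz
    gcongr <;> linarith [Real.rpow_nonneg (norm_nonneg z) ϱ]
  · rw [indicator_of_notMem hz, add_zero, mul_one]
    have hz' : 1 ≤ ‖z‖ := by simpa using hz
    calc (1 + ‖z‖) ^ (-ϱ) * ‖z‖ ^ ϱ ≤ (2 * ‖z‖) ^ (-ϱ) * ‖z‖ ^ ϱ := by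
          gcongr <;> linarith
      _ = 2 ^ (-ϱ) := by
          rw [Real.mul_rpow zero_le_two (by positivity), mul_assoc, ← Real.rpow_add (by positivity),
            neg_add_cancel, Real.rpow_zero, mul_one]

theorem one_add_sq_rpow_le {s : ℝ} (hs : 0 ≤ s) {x : ℝ} (hx : 0 ≤ x) :
    (1 + x ^ 2) ^ (s / 2) ≤ (1 + x) ^ s := by
  calc (1 + x ^ 2) ^ (s / 2) ≤ ((1 + x) ^ 2) ^ (s / 2) := by gcongr; nlinarith
    _ = (1 + x) ^ s := by
        rw [← Real.rpow_natCast, ← Real.rpow_mul (by positivity)]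
        ring_nf

variable {ϱ : ℝ}

theorem one_add_sq_rpow_mul_norm_sub_rpow_mul_exp_le (hϱ : ϱ < 0) (u v : V3) :
    (1 + ‖v‖ ^ 2) ^ (-ϱ / 2) * (‖v - u‖ ^ ϱ * Real.exp (-‖u‖ ^ 2 / 4)) ≤
      2 ^ (-ϱ) * ((1 + ‖u‖) ^ (-ϱ) * Real.exp (-‖u‖ ^ 2 / 4) +
        Real.exp (2 * ϱ ^ 2) * (ball (0 : V3) 1).indicator (‖·‖ ^ ϱ) (v - u)) := by
  have hk : 0 ≤ (ball (0 : V3) 1).indicator (‖·‖ ^ ϱ) (v - u) :=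
    indicator_nonneg (fun z _ => by positivity) _
  calc (1 + ‖v‖ ^ 2) ^ (-ϱ / 2) * (‖v - u‖ ^ ϱ * Real.exp (-‖u‖ ^ 2 / 4))
      ≤ ((1 + ‖u‖) * (1 + ‖v - u‖)) ^ (-ϱ) * (‖v - u‖ ^ ϱ * Real.exp (-‖u‖ ^ 2 / 4)) := by
        refine mul_le_mul_of_nonneg_right ?_ (by positivity)
        exact (one_add_sq_rpow_le (by linarith) (norm_nonneg v)).trans
          (Real.rpow_le_rpow (by positivity) (one_add_norm_le_mul_one_add_norm_sub u v)
            (by linarith))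
    _ = ((1 + ‖u‖) ^ (-ϱ) * Real.exp (-‖u‖ ^ 2 / 4)) *
          ((1 + ‖v - u‖) ^ (-ϱ) * ‖v - u‖ ^ ϱ) := by
        rw [Real.mul_rpow (by positivity) (by positivity)]
        ring
    _ ≤ ((1 + ‖u‖) ^ (-ϱ) * Real.exp (-‖u‖ ^ 2 / 4)) *
          (2 ^ (-ϱ) * (1 + (ball (0 : V3) 1).indicator (‖·‖ ^ ϱ) (v - u))) :=
        mul_le_mul_of_nonneg_left (one_add_norm_rpow_mul_norm_rpow_le hϱ (v - u))
          (by positivity)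
    _ = 2 ^ (-ϱ) * ((1 + ‖u‖) ^ (-ϱ) * Real.exp (-‖u‖ ^ 2 / 4) +
          ((1 + ‖u‖) ^ (-ϱ) * Real.exp (-‖u‖ ^ 2 / 4)) *
            (ball (0 : V3) 1).indicator (‖·‖ ^ ϱ) (v - u)) := by ring
    _ ≤ 2 ^ (-ϱ) * ((1 + ‖u‖) ^ (-ϱ) * Real.exp (-‖u‖ ^ 2 / 4) +
          Real.exp (2 * ϱ ^ 2) * (ball (0 : V3) 1).indicator (‖·‖ ^ ϱ) (v - u)) := by
        have := one_add_rpow_mul_exp_neg_sq_le_exp (a := -ϱ) (by linarith) (norm_nonneg u)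
        rw [neg_sq] at this
        gcongr

theorem exists_integral_norm_sub_rpow_mul_exp_le (hϱ₁ : -3 < ϱ) (hϱ₂ : ϱ < 0) :
    ∃ K, ∀ v : V3, Integrable (fun u => ‖v - u‖ ^ ϱ * Real.exp (-‖u‖ ^ 2 / 4)) ∧
      (1 + ‖v‖ ^ 2) ^ (-ϱ / 2) * ∫ u, ‖v - u‖ ^ ϱ * Real.exp (-‖u‖ ^ 2 / 4) ≤ K := by
  have hd : 1 ≤ Module.finrank ℝ V3 := by simp
  have hg := integrable_one_add_norm_rpow_mul_exp (a := -ϱ) (by linarith)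
  have hk := integrable_indicator_ball_norm_rpow (μ := (volume : Measure V3)) hd
    (ϱ := ϱ) (by simp; linarith)
  refine ⟨2 ^ (-ϱ) * ((∫ u : V3, (1 + ‖u‖) ^ (-ϱ) * Real.exp (-‖u‖ ^ 2 / 4)) +
    Real.exp (2 * ϱ ^ 2) * ∫ z, (ball (0 : V3) 1).indicator (‖·‖ ^ ϱ) z), fun v => ?_⟩
  have hmaj : Integrable fun u => 2 ^ (-ϱ) * ((1 + ‖u‖) ^ (-ϱ) * Real.exp (-‖u‖ ^ 2 / 4) +
      Real.exp (2 * ϱ ^ 2) * (ball (0 : V3) 1).indicator (‖·‖ ^ ϱ) (v - u)) :=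
    (hg.add ((hk.comp_sub_left v).const_mul _)).const_mul _
  have hP : 1 ≤ (1 + ‖v‖ ^ 2) ^ (-ϱ / 2) :=
    Real.one_le_rpow (le_add_of_nonneg_right (sq_nonneg _)) (by linarith)
  have hint : Integrable (fun u => ‖v - u‖ ^ ϱ * Real.exp (-‖u‖ ^ 2 / 4)) := by
    refine hmaj.mono' ((measurable_id.const_sub v).norm.pow_const ϱ |>.mul
      (by fun_prop)).aestronglyMeasurable (ae_of_all _ fun u => ?_)
    rw [Real.norm_of_nonneg (by positivity)]
    exact (le_mul_of_one_le_left (by positivity) hP).trans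
      (one_add_sq_rpow_mul_norm_sub_rpow_mul_exp_le hϱ₂ u v)
  refine ⟨hint, ?_⟩
  rw [← integral_const_mul]
  refine (integral_mono (hint.const_mul _) hmaj
    (fun u => one_add_sq_rpow_mul_norm_sub_rpow_mul_exp_le hϱ₂ u v)).trans_eq ?_
  rw [integral_const_mul, integral_add hg ((hk.comp_sub_left v).const_mul _), integral_const_mul,
    integral_sub_left_eq_self]

end KernelDecay

theorem norm_integral_integral_le_of_norm_le {α β E : Type*} [MeasurableSpace α]
    [MeasurableSpace β] [NormedAddCommGroup E] [NormedSpace ℝ E] {μ : Measure α} {ν : Measure β}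
    [IsFiniteMeasure ν] {F : α → β → E} {r : α → ℝ} (hr : Integrable r μ)
    (hF : ∀ x y, ‖F x y‖ ≤ r x) :
    ‖∫ x, ∫ y, F x y ∂ν ∂μ‖ ≤ ν.real univ * ∫ x, r x ∂μ := by
  rw [← integral_const_mul]
  refine norm_integral_le_of_norm_le (hr.const_mul _) (ae_of_all _ fun x => ?_)
  rw [mul_comm]
  exact norm_integral_le_of_norm_le_const (ae_of_all _ (hF x))

instance : IsFiniteMeasure sphMeasure :=
  inferInstanceAs (IsFiniteMeasure (volume : Measure V3).toSphere)

theorem norm_collisionKernel_mul_le {ϱ C₀ q θ ϑ t M₁ M₂ X : ℝ} {b₀ : ℝ → ℝ} {f₁ f₂ : V3 → ℝ}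
    {u v ω : V3} (hq : 0 ≤ q) (hθ₀ : 0 ≤ θ) (hθ₂ : θ ≤ 2) (ht : 0 ≤ t) (hC₀ : 0 ≤ C₀)
    (hb₀nonneg : ∀ s, 0 ≤ b₀ s) (hb₀le : ∀ s, b₀ s ≤ C₀ * max s 0)
    (hM₁ : ∀ u, wt q θ ϑ t u * |f₁ u| ≤ M₁) (hM₂ : ∀ u, wt q θ ϑ t u * |f₂ u| ≤ M₂)
    (hω : ‖ω‖ = 1) (hX : |X| ≤ |f₁ (uPost u v ω)| * |f₂ (vPost u v ω)| + |f₁ u| * |f₂ v|) :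
    ‖collisionKernel ϱ b₀ u v ω * X‖ ≤
      2 * C₀ * (M₁ * M₂) / wt q θ ϑ t v * (‖v - u‖ ^ ϱ * Real.exp (-‖u‖ ^ 2 / 4)) := by
  have hW : 0 < wt q θ ϑ t v := zero_lt_one.trans_le (one_le_wt hq ht v)
  rw [norm_mul, Real.norm_of_nonneg (collisionKernel_nonneg hb₀nonneg), Real.norm_eq_abs]
  calc collisionKernel ϱ b₀ u v ω * |X|
      ≤ C₀ * (‖v - u‖ ^ ϱ * Real.exp (-‖u‖ ^ 2 / 4)) *
          (|f₁ (uPost u v ω)| * |f₂ (vPost u v ω)| + |f₁ u| * |f₂ v|) :=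
        mul_le_mul (collisionKernel_le hC₀ hb₀le hω) hX (abs_nonneg _) (by positivity)
    _ = C₀ * (‖v - u‖ ^ ϱ * Real.exp (-‖u‖ ^ 2 / 4)) * (wt q θ ϑ t v *
          (|f₁ (uPost u v ω)| * |f₂ (vPost u v ω)| + |f₁ u| * |f₂ v|)) / wt q θ ϑ t v := by
        field_simp
    _ ≤ C₀ * (‖v - u‖ ^ ϱ * Real.exp (-‖u‖ ^ 2 / 4)) * (2 * (M₁ * M₂)) / wt q θ ϑ t v := by
        gcongr C₀ * _ * ?_ / _
        exact wt_mul_collision_le hq hθ₀ hθ₂ ht hM₁ hM₂ hω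
    _ = _ := by ring

theorem weighted_norm_integral_collisionKernel_mul_le {ϱ C₀ q θ ϑ t M₁ M₂ K C : ℝ}
    {b₀ : ℝ → ℝ} {f₁ f₂ : V3 → ℝ} {v : V3} (hq : 0 ≤ q) (hθ₀ : 0 ≤ θ) (hθ₂ : θ ≤ 2)
    (ht : 0 ≤ t) (hC₀ : 0 ≤ C₀) (hb₀nonneg : ∀ s, 0 ≤ b₀ s) (hb₀le : ∀ s, b₀ s ≤ C₀ * max s 0)
    (hM₁ : ∀ u, wt q θ ϑ t u * |f₁ u| ≤ M₁) (hM₂ : ∀ u, wt q θ ϑ t u * |f₂ u| ≤ M₂)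
    (hint : Integrable fun u => ‖v - u‖ ^ ϱ * Real.exp (-‖u‖ ^ 2 / 4))
    (hdecay : (1 + ‖v‖ ^ 2) ^ (-ϱ / 2) * ∫ u, ‖v - u‖ ^ ϱ * Real.exp (-‖u‖ ^ 2 / 4) ≤ K)
    (hC : 2 * C₀ * sphMeasure.real univ * K ≤ C) {X : V3 → sphere (0 : V3) 1 → ℝ}
    (hX : ∀ u ω, |X u ω| ≤
      |f₁ (uPost u v ω)| * |f₂ (vPost u v ω)| + |f₁ u| * |f₂ v|) :
    (1 + ‖v‖ ^ 2) ^ (-ϱ / 2) * wt q θ ϑ t v *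
        ‖∫ u, ∫ ω, collisionKernel ϱ b₀ u v ω * X u ω ∂sphMeasure‖ ≤ C * M₁ * M₂ := by
  have hW : 0 < wt q θ ϑ t v := zero_lt_one.trans_le (one_le_wt hq ht v)
  have hM : 0 ≤ M₁ * M₂ := mul_nonneg ((mul_nonneg hW.le (abs_nonneg _)).trans (hM₁ v))
    ((mul_nonneg hW.le (abs_nonneg _)).trans (hM₂ v))
  calc (1 + ‖v‖ ^ 2) ^ (-ϱ / 2) * wt q θ ϑ t v *
        ‖∫ u, ∫ ω, collisionKernel ϱ b₀ u v ω * X u ω ∂sphMeasure‖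
      ≤ (1 + ‖v‖ ^ 2) ^ (-ϱ / 2) * wt q θ ϑ t v * (sphMeasure.real univ *
          ∫ u, 2 * C₀ * (M₁ * M₂) / wt q θ ϑ t v *
            (‖v - u‖ ^ ϱ * Real.exp (-‖u‖ ^ 2 / 4))) := by
        gcongr
        exact norm_integral_integral_le_of_norm_le (hint.const_mul _) fun u ω =>
          norm_collisionKernel_mul_le hq hθ₀ hθ₂ ht hC₀ hb₀nonneg hb₀le hM₁ hM₂
            (mem_sphere_zero_iff_norm.1 ω.2) (hX u ω)
    _ = 2 * C₀ * sphMeasure.real univ * (M₁ * M₂) *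
          ((1 + ‖v‖ ^ 2) ^ (-ϱ / 2) * ∫ u, ‖v - u‖ ^ ϱ * Real.exp (-‖u‖ ^ 2 / 4)) := by
        rw [integral_const_mul]
        field_simp
    _ ≤ 2 * C₀ * sphMeasure.real univ * (M₁ * M₂) * K := by gcongr
    _ ≤ C * M₁ * M₂ := by
        rw [mul_assoc C]
        nlinarith

theorem weighted_Linfty_estimate_Gamma_general
    (ϱ : ℝ) (hϱ₁ : -3 < ϱ) (hϱ₂ : ϱ < 0)
    (b₀ : ℝ → ℝ) (hb₀nonneg : ∀ s, 0 ≤ b₀ s)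
    (C₀ : ℝ) (hC₀ : 0 < C₀) (hb₀le : ∀ s, b₀ s ≤ C₀ * max s 0)
    (q θ ϑ : ℝ) (hq : 0 < q) (hθ₁ : 0 < θ) (hθ₂ : θ ≤ 2) :
    ∃ C : ℝ, 0 < C ∧
      ∀ t : ℝ, 0 ≤ t → ∀ f₁ f₂ : V3 → ℝ, Measurable f₁ → Measurable f₂ →
        ∀ M₁ M₂ : ℝ,
          (∀ u : V3, wt q θ ϑ t u * |f₁ u| ≤ M₁) →
          (∀ u : V3, wt q θ ϑ t u * |f₂ u| ≤ M₂) →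
          ∀ v : V3,
            (1 + ‖v‖ ^ 2) ^ (-ϱ / 2) * wt q θ ϑ t v *
                (∫ u : V3, ∫ ω : Metric.sphere (0 : V3) 1,
                    ‖v - u‖ ^ ϱ * b₀ ((inner ℝ (ω : V3) (u - v) : ℝ) / ‖u - v‖) *
                      Real.sqrt (maxwellian u) *
                      (|f₁ (uPost u v (ω : V3))| * |f₂ (vPost u v (ω : V3))|
                        + |f₁ u| * |f₂ v|) ∂sphMeasure) ≤
              C * M₁ * M₂ ∧
            (1 + ‖v‖ ^ 2) ^ (-ϱ / 2) * wt q θ ϑ t v * |GamOp ϱ b₀ f₁ f₂ v| ≤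
              C * M₁ * M₂ := by
  obtain ⟨K, hK⟩ := exists_integral_norm_sub_rpow_mul_exp_le hϱ₁ hϱ₂
  refine ⟨max (2 * C₀ * sphMeasure.real univ * K) 1, lt_max_of_lt_right one_pos, ?_⟩
  intro t ht f₁ f₂ _ _ M₁ M₂ hM₁ hM₂ v
  have bound := fun (X : V3 → sphere (0 : V3) 1 → ℝ) =>
    weighted_norm_integral_collisionKernel_mul_le (X := X) hq.le hθ₁.le hθ₂ ht hC₀.le
      hb₀nonneg hb₀le hM₁ hM₂ (hK v).1 (hK v).2 (le_max_left _ 1)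
  constructor
  · refine le_trans (mul_le_mul_of_nonneg_left (Real.le_norm_self _) ?_)
      (bound _ fun u ω => (abs_of_nonneg (by positivity)).le)
    exact mul_nonneg (by positivity) (Real.exp_pos _).le
  · rw [GamOp, ← Real.norm_eq_abs]
    exact bound _ fun u ω => (abs_sub _ _).trans_eq (by rw [abs_mul, abs_mul])

/-- Weighted `L^∞` estimate `‖ν⁻¹ w Γ(f₁,f₂)‖_∞ ≤ C ‖w f₁‖_∞ ‖w f₂‖_∞` (Lemma 2.3, (2.9)),
with `ν(v)` replaced by the comparable quantity `(1+|v|²)^{ϱ/2}`, and the `L^∞` norms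
expressed via pointwise bounds `M₁, M₂`. -/
theorem weighted_Linfty_estimate_Gamma
    (ϱ : ℝ) (hϱ₁ : -3 < ϱ) (hϱ₂ : ϱ < 0)
    (b₀ : ℝ → ℝ) (hb₀meas : Measurable b₀) (hb₀nonneg : ∀ s, 0 ≤ b₀ s)
    (C₀ : ℝ) (hC₀ : 0 < C₀) (hb₀le : ∀ s, b₀ s ≤ C₀ * max s 0)
    (q θ ϑ : ℝ) (hq : 0 < q) (hθ₁ : 0 < θ) (hθ₂ : θ ≤ 2)
    (hqθ : θ = 2 → q < 1) (hϑ : 0 ≤ ϑ) :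
    ∃ C : ℝ, 0 < C ∧
      ∀ t : ℝ, 0 ≤ t → ∀ f₁ f₂ : V3 → ℝ, Measurable f₁ → Measurable f₂ →
        ∀ M₁ M₂ : ℝ,
          (∀ u : V3, wt q θ ϑ t u * |f₁ u| ≤ M₁) →
          (∀ u : V3, wt q θ ϑ t u * |f₂ u| ≤ M₂) →
          ∀ v : V3,
            (1 + ‖v‖ ^ 2) ^ (-ϱ / 2) * wt q θ ϑ t v *
                (∫ u : V3, ∫ ω : Metric.sphere (0 : V3) 1,
                    ‖v - u‖ ^ ϱ * b₀ ((inner ℝ (ω : V3) (u - v) : ℝ) / ‖u - v‖) *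
                      Real.sqrt (maxwellian u) *
                      (|f₁ (uPost u v (ω : V3))| * |f₂ (vPost u v (ω : V3))|
                        + |f₁ u| * |f₂ v|) ∂sphMeasure) ≤
              C * M₁ * M₂ ∧
            (1 + ‖v‖ ^ 2) ^ (-ϱ / 2) * wt q θ ϑ t v * |GamOp ϱ b₀ f₁ f₂ v| ≤
              C * M₁ * M₂ :=
  weighted_Linfty_estimate_Gamma_general ϱ hϱ₁ hϱ₂ b₀ hb₀nonneg C₀ hC₀ hb₀le q θ ϑ hq hθ₁ hθ₂
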